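/- Relative bound of the Jaynes-Cummings interaction by the photon number operator: for every 0 < b < 1 there exists c > 0 such that for all states ψ in the finite-excitation span of the M-cavity system, ‖H_I ψ‖ ≤ b‖H_P ψ‖ + c‖ψ‖, where H_P = ∑_i ω^P_i a*_i a_i with all ω^P_i > 0 and H_I = ∑_i ω^I_i (a*_i σ⁻_i + a_i σ⁺_i). -/

import Mathlib

/-! The `M`-cavity JCH system on the finite-excitation span `D`, modeled as finitely
supported functions on the basis index set `(Fin M → ℕ) × (Fin M → Bool)`
(photon numbers `m_i` and atomic bits `b_i`), with the ℓ²-norm on coefficients. -/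

noncomputable section

/-- Finite-excitation span of the `M`-cavity system. -/
abbrev CavSpan (M : ℕ) : Type := ((Fin M → ℕ) × (Fin M → Bool)) →₀ ℂ

/-- Photon annihilation operator `a_i` in cavity `i`. -/
def ann (M : ℕ) (i : Fin M) : Module.End ℂ (CavSpan M) :=
  Finsupp.lsum ℂ fun p =>
    (Real.sqrt (p.1 i) : ℂ) •
      Finsupp.lsingle (Function.update p.1 i (p.1 i - 1), p.2)

/-- Photon creation operator `a*_i` in cavity `i`. -/
def cre (M : ℕ) (i : Fin M) : Module.End ℂ (CavSpan M) :=
  Finsupp.lsum ℂ fun p =>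
    (Real.sqrt (p.1 i + 1) : ℂ) •
      Finsupp.lsingle (Function.update p.1 i (p.1 i + 1), p.2)

/-- Atomic raising operator `σ⁺_i` in cavity `i`. -/
def sigmaPlus (M : ℕ) (i : Fin M) : Module.End ℂ (CavSpan M) :=
  Finsupp.lsum ℂ fun p =>
    if p.2 i then 0 else Finsupp.lsingle (p.1, Function.update p.2 i true)

/-- Atomic lowering operator `σ⁻_i` in cavity `i`. -/
def sigmaMinus (M : ℕ) (i : Fin M) : Module.End ℂ (CavSpan M) :=
  Finsupp.lsum ℂ fun p =>
    if p.2 i then Finsupp.lsingle (p.1, Function.update p.2 i false) else 0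

/-- Free photon Hamiltonian `H_P = ∑_i ω^P_i a*_i a_i`. -/
def HP (M : ℕ) (ωP : Fin M → ℝ) : Module.End ℂ (CavSpan M) :=
  ∑ i, (ωP i : ℂ) • (cre M i * ann M i)

/-- Atom-photon interaction `H_I = ∑_i ω^I_i (a*_i σ⁻_i + a_i σ⁺_i)`. -/
def HI (M : ℕ) (ωI : Fin M → ℝ) : Module.End ℂ (CavSpan M) :=
  ∑ i, (ωI i : ℂ) • (cre M i * sigmaMinus M i + ann M i * sigmaPlus M i)

/-- The ℓ²-norm of a vector of the finite-excitation span. -/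
def nrm {M : ℕ} (ψ : CavSpan M) : ℝ :=
  Real.sqrt (∑ x ∈ ψ.support, ‖ψ x‖ ^ 2)

/-!
The operators `a*_i σ⁻_i`, `a_i σ⁺_i` and `H_P` all act on the basis as weighted shifts that are
injective where the weight is nonzero, so the norm of the image of `ψ` is a weighted ℓ²-norm of the
coefficients of `ψ`. With `N` the total photon number, the interaction weights are at most
`√(N + 1)`, while `H_P` has weight at least `μ N`. Since `N + 1 ≤ ε² N² + C_ε` for every `ε > 0`,
each interaction term is infinitesimally `H_P`-bounded (relative bound `0`). These operators form
a submodule, which therefore contains `H_I`.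
-/

open Finsupp Filter

namespace JaynesCummings

variable {M : ℕ}

abbrev CavIdx (M : ℕ) : Type := (Fin M → ℕ) × (Fin M → Bool)

lemma sqrt_add_le_sqrt_add_sqrt {x y : ℝ} (hx : 0 ≤ x) (hy : 0 ≤ y) : √(x + y) ≤ √x + √y :=
  Real.sqrt_le_iff.2 ⟨by positivity, by
    nlinarith [Real.sq_sqrt hx, Real.sq_sqrt hy, Real.sqrt_nonneg x, Real.sqrt_nonneg y]⟩

lemma exists_pos_forall_le {ι : Type*} [Finite ι] {f : ι → ℝ} (hf : ∀ i, 0 < f i) :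
    ∃ μ > 0, ∀ i, μ ≤ f i :=
  ((eventually_mem_nhdsWithin (a := 0) (s := Set.Ioi 0)).and
    (eventually_all.2 fun i => (eventually_le_nhds (hf i)).filter_mono nhdsWithin_le_nhds)).exists

lemma nrm_eq_sqrt_sum_of_support_subset {ψ : CavSpan M} {s : Finset (CavIdx M)}
    (h : ψ.support ⊆ s) : nrm ψ = √(∑ x ∈ s, ‖ψ x‖ ^ 2) := by
  unfold nrm
  rw [Finset.sum_subset h fun x _ hx => by simp [notMem_support_iff.mp hx]]

def toEuclidean (s : Finset (CavIdx M)) : CavSpan M →ₗ[ℂ] EuclideanSpace ℂ s :=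
  (EuclideanSpace.equiv s ℂ).symm.toLinearMap ∘ₗ LinearMap.pi fun x => lapply (x : CavIdx M)

lemma nrm_eq_norm_toEuclidean {ψ : CavSpan M} {s : Finset (CavIdx M)} (h : ψ.support ⊆ s) :
    nrm ψ = ‖toEuclidean s ψ‖ := by
  rw [nrm_eq_sqrt_sum_of_support_subset h, EuclideanSpace.norm_eq, ← Finset.sum_coe_sort s]
  rfl

lemma nrm_nonneg (ψ : CavSpan M) : 0 ≤ nrm ψ := Real.sqrt_nonneg _

lemma nrm_add_le (φ ψ : CavSpan M) : nrm (φ + ψ) ≤ nrm φ + nrm ψ := by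
  classical
  rw [nrm_eq_norm_toEuclidean support_add,
    nrm_eq_norm_toEuclidean (Finset.subset_union_left (s₂ := ψ.support)),
    nrm_eq_norm_toEuclidean (Finset.subset_union_right (s₁ := φ.support)), map_add]
  exact norm_add_le _ _

lemma nrm_smul (r : ℂ) (ψ : CavSpan M) : nrm (r • ψ) = ‖r‖ * nrm ψ := by
  rw [nrm_eq_norm_toEuclidean support_smul, nrm_eq_norm_toEuclidean subset_rfl, map_smul,
    norm_smul]

lemma nrm_mapDomain {σ : CavIdx M → CavIdx M} {ψ : CavSpan M} (hσ : Set.InjOn σ ψ.support) :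
    nrm (mapDomain σ ψ) = nrm ψ := by
  classical
  rw [nrm_eq_sqrt_sum_of_support_subset (mapDomain_support_of_injOn ψ hσ).le,
    Finset.sum_image hσ]
  refine congrArg _ (Finset.sum_congr rfl fun p hp => ?_)
  rw [mapDomain_apply' _ ψ subset_rfl hσ hp]

def weightedShift (w : CavIdx M → ℝ) (σ : CavIdx M → CavIdx M) : Module.End ℂ (CavSpan M) :=
  lsum ℂ fun p => (w p : ℂ) • lsingle (σ p)

lemma weightedShift_id_apply (w : CavIdx M → ℝ) (ψ : CavSpan M) (p : CavIdx M) :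
    weightedShift w id ψ p = w p * ψ p := by
  induction ψ using Finsupp.induction_linear with
  | zero => simp
  | add φ ψ hφ hψ => simp [hφ, hψ, mul_add]
  | single q c => by_cases h : q = p <;> simp [weightedShift, h]

lemma weightedShift_eq_comp (w : CavIdx M → ℝ) (σ : CavIdx M → CavIdx M) :
    weightedShift w σ = lmapDomain ℂ ℂ σ ∘ₗ weightedShift w id :=
  lhom_ext fun p c => by
    simp only [weightedShift, LinearMap.comp_apply, lsum_single, LinearMap.smul_apply,
      lsingle_apply, lmapDomain_apply, id, mapDomain_smul, mapDomain_single]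

lemma nrm_weightedShift_id (w : CavIdx M → ℝ) (ψ : CavSpan M) :
    nrm (weightedShift w id ψ) = √(∑ p ∈ ψ.support, w p ^ 2 * ‖ψ p‖ ^ 2) := by
  rw [nrm_eq_sqrt_sum_of_support_subset (s := ψ.support) fun p hp => ?_]
  · simp [weightedShift_id_apply, mul_pow]
  · exact mem_support_iff.2 fun h => mem_support_iff.1 hp (by simp [weightedShift_id_apply, h])

lemma nrm_weightedShift {w : CavIdx M → ℝ} {σ : CavIdx M → CavIdx M}
    (hσ : Set.InjOn σ {p | w p ≠ 0}) (ψ : CavSpan M) :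
    nrm (weightedShift w σ ψ) = √(∑ p ∈ ψ.support, w p ^ 2 * ‖ψ p‖ ^ 2) := by
  rw [weightedShift_eq_comp, LinearMap.comp_apply, lmapDomain_apply,
    nrm_mapDomain (hσ.mono fun p hp h => ?_), nrm_weightedShift_id]
  exact mem_support_iff.1 hp (by simp [weightedShift_id_apply, h])

def infinitesimallyBounded (B : Module.End ℂ (CavSpan M)) :
    Submodule ℂ (Module.End ℂ (CavSpan M)) where
  carrier := {A | ∀ a > 0, ∃ c, ∀ ψ, nrm (A ψ) ≤ a * nrm (B ψ) + c * nrm ψ}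
  zero_mem' a ha := ⟨0, fun ψ => by simpa [nrm] using mul_nonneg ha.le (nrm_nonneg (B ψ))⟩
  add_mem' {A₁ A₂} h₁ h₂ a ha := by
    obtain ⟨c₁, hc₁⟩ := h₁ (a / 2) (half_pos ha)
    obtain ⟨c₂, hc₂⟩ := h₂ (a / 2) (half_pos ha)
    exact ⟨c₁ + c₂, fun ψ => (nrm_add_le (A₁ ψ) (A₂ ψ)).trans (by linarith [hc₁ ψ, hc₂ ψ])⟩
  smul_mem' r A h a ha := by
    obtain ⟨c, hc⟩ := h (a / (‖r‖ + 1)) (by positivity)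
    have hr : ‖r‖ * (a / (‖r‖ + 1)) ≤ a := by
      rw [← mul_div_assoc, div_le_iff₀ (by positivity)]
      nlinarith [norm_nonneg r]
    refine ⟨‖r‖ * c, fun ψ => ?_⟩
    rw [LinearMap.smul_apply, nrm_smul]
    calc ‖r‖ * nrm (A ψ) ≤ ‖r‖ * (a / (‖r‖ + 1) * nrm (B ψ) + c * nrm ψ) :=
          mul_le_mul_of_nonneg_left (hc ψ) (norm_nonneg r)
      _ = ‖r‖ * (a / (‖r‖ + 1)) * nrm (B ψ) + ‖r‖ * c * nrm ψ := by ring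
      _ ≤ a * nrm (B ψ) + ‖r‖ * c * nrm ψ := by
          gcongr
          exact nrm_nonneg _

lemma weightedShift_mem_infinitesimallyBounded {w v : CavIdx M → ℝ}
    {σ τ : CavIdx M → CavIdx M} (hσ : Set.InjOn σ {p | w p ≠ 0})
    (hτ : Set.InjOn τ {p | v p ≠ 0}) (h : ∀ a > 0, ∃ c, ∀ p, w p ^ 2 ≤ a ^ 2 * v p ^ 2 + c ^ 2) :
    weightedShift w σ ∈ infinitesimallyBounded (weightedShift v τ) := by
  intro a ha
  obtain ⟨c, hc⟩ := h a ha
  refine ⟨|c|, fun ψ => ?_⟩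
  rw [nrm_weightedShift hσ, nrm_weightedShift hτ, nrm]
  set V := ∑ p ∈ ψ.support, v p ^ 2 * ‖ψ p‖ ^ 2
  set N := ∑ p ∈ ψ.support, ‖ψ p‖ ^ 2
  have hsum : ∑ p ∈ ψ.support, w p ^ 2 * ‖ψ p‖ ^ 2 ≤ a ^ 2 * V + c ^ 2 * N := by
    rw [Finset.mul_sum, Finset.mul_sum, ← Finset.sum_add_distrib]
    gcongr with p
    nlinarith [hc p, sq_nonneg ‖ψ p‖]
  calc √(∑ p ∈ ψ.support, w p ^ 2 * ‖ψ p‖ ^ 2) ≤ √(a ^ 2 * V + c ^ 2 * N) :=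
        Real.sqrt_le_sqrt hsum
    _ ≤ √(a ^ 2 * V) + √(c ^ 2 * N) := sqrt_add_le_sqrt_add_sqrt (by positivity) (by positivity)
    _ = a * √V + |c| * √N := by
        rw [Real.sqrt_mul (sq_nonneg a), Real.sqrt_mul (sq_nonneg c), Real.sqrt_sq ha.le,
          Real.sqrt_sq_eq_abs]

def emit (i : Fin M) (p : CavIdx M) : CavIdx M :=
  (Function.update p.1 i (p.1 i + 1), Function.update p.2 i false)

def absorb (i : Fin M) (p : CavIdx M) : CavIdx M :=
  (Function.update p.1 i (p.1 i - 1), Function.update p.2 i true)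

def emitWeight (i : Fin M) (p : CavIdx M) : ℝ := if p.2 i then √(p.1 i + 1) else 0

def absorbWeight (i : Fin M) (p : CavIdx M) : ℝ := if p.2 i then 0 else √(p.1 i)

lemma cre_mul_sigmaMinus (i : Fin M) :
    cre M i * sigmaMinus M i = weightedShift (emitWeight i) (emit i) :=
  lhom_ext fun p c => by
    by_cases h : p.2 i <;>
      simp [Module.End.mul_apply, cre, sigmaMinus, weightedShift, h, emitWeight, emit]

lemma ann_mul_sigmaPlus (i : Fin M) :
    ann M i * sigmaPlus M i = weightedShift (absorbWeight i) (absorb i) :=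
  lhom_ext fun p c => by
    by_cases h : p.2 i <;>
      simp [Module.End.mul_apply, ann, sigmaPlus, weightedShift, h, absorbWeight, absorb]

lemma absorb_emit {i : Fin M} {p : CavIdx M} (h : p.2 i = true) : absorb i (emit i p) = p := by
  simp [absorb, emit, ← h]

lemma emit_absorb {i : Fin M} {p : CavIdx M} (h : p.2 i = false) (h' : p.1 i ≠ 0) :
    emit i (absorb i p) = p := by
  simp [absorb, emit, ← h, Nat.sub_add_cancel (Nat.one_le_iff_ne_zero.2 h')]

lemma injOn_emit (i : Fin M) : Set.InjOn (emit i) {p | emitWeight i p ≠ 0} :=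
  Set.LeftInvOn.injOn (f₁' := absorb i) fun p hp =>
    absorb_emit (by by_contra h; simp [emitWeight, h] at hp)

lemma injOn_absorb (i : Fin M) : Set.InjOn (absorb i) {p | absorbWeight i p ≠ 0} :=
  Set.LeftInvOn.injOn (f₁' := emit i) fun p hp => by
    by_cases h : p.2 i
    · simp [absorbWeight, h] at hp
    · exact emit_absorb (by simpa using h) (by rintro h0; simp [absorbWeight, h, h0] at hp)

def photonNumber (p : CavIdx M) : ℝ := ∑ i, (p.1 i : ℝ)

def photonEnergy (ωP : Fin M → ℝ) (p : CavIdx M) : ℝ := ∑ i, ωP i * p.1 i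

lemma cre_mul_ann_single (i : Fin M) (p : CavIdx M) (c : ℂ) :
    (cre M i * ann M i) (single p c) = ((p.1 i : ℝ) : ℂ) • single p c := by
  rcases Nat.eq_zero_or_pos (p.1 i) with h | h
  · simp [Module.End.mul_apply, ann, cre, h]
  · have h1 : p.1 i - 1 + 1 = p.1 i := Nat.succ_pred_eq_of_pos h
    have h2 : ((p.1 i - 1 : ℕ) : ℝ) + 1 = p.1 i := by exact_mod_cast h1
    simp only [Module.End.mul_apply, ann, cre, lsum_single, LinearMap.smul_apply,
      lsingle_apply, map_smul, Function.update_self, Function.update_idem, h1,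
      Function.update_eq_self, smul_smul]
    rw [h2, ← Complex.ofReal_mul, Real.mul_self_sqrt (by positivity)]

lemma HP_eq_weightedShift (ωP : Fin M → ℝ) : HP M ωP = weightedShift (photonEnergy ωP) id :=
  lhom_ext fun p c => by
    simp only [HP, weightedShift, LinearMap.sum_apply, LinearMap.smul_apply, cre_mul_ann_single,
      smul_smul, ← Complex.ofReal_mul, ← Finset.sum_smul, ← Complex.ofReal_sum, lsum_single,
      lsingle_apply, id, photonEnergy]

lemma cast_le_photonNumber (i : Fin M) (p : CavIdx M) : (p.1 i : ℝ) ≤ photonNumber p :=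
  Finset.single_le_sum (f := fun j => (p.1 j : ℝ)) (fun _ _ => Nat.cast_nonneg _)
    (Finset.mem_univ i)

lemma emitWeight_sq_le (i : Fin M) (p : CavIdx M) : emitWeight i p ^ 2 ≤ photonNumber p + 1 := by
  have := cast_le_photonNumber i p
  unfold emitWeight
  split_ifs
  · rw [Real.sq_sqrt (by positivity)]; linarith
  · nlinarith [(p.1 i).cast_nonneg (α := ℝ)]

lemma absorbWeight_sq_le (i : Fin M) (p : CavIdx M) :
    absorbWeight i p ^ 2 ≤ photonNumber p + 1 := by
  have := cast_le_photonNumber i p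
  unfold absorbWeight
  split_ifs
  · nlinarith [(p.1 i).cast_nonneg (α := ℝ)]
  · rw [Real.sq_sqrt (by positivity)]; linarith

lemma mul_photonNumber_le_photonEnergy {ωP : Fin M → ℝ} {μ : ℝ} (hμ : ∀ i, μ ≤ ωP i)
    (p : CavIdx M) : μ * photonNumber p ≤ photonEnergy ωP p := by
  rw [photonNumber, Finset.mul_sum]
  exact Finset.sum_le_sum fun i _ => mul_le_mul_of_nonneg_right (hμ i) (Nat.cast_nonneg _)

lemma exists_photonNumber_add_one_le {ωP : Fin M → ℝ} {μ : ℝ} (hμ₀ : 0 < μ)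
    (hμ : ∀ i, μ ≤ ωP i) {a : ℝ} (ha : 0 < a) :
    ∃ c, ∀ p : CavIdx M, photonNumber p + 1 ≤ a ^ 2 * photonEnergy ωP p ^ 2 + c ^ 2 := by
  -- `d` is chosen so that `2 (a μ N) d = N`, turning AM-GM into `N ≤ (a μ N)² + d²`.
  set d := 1 / (2 * (a * μ))
  have hd : 0 < d := by positivity
  refine ⟨1 + d, fun p => ?_⟩
  set N := photonNumber p
  have hN : 0 ≤ μ * N := mul_nonneg hμ₀.le (Finset.sum_nonneg fun _ _ => Nat.cast_nonneg _)
  have hE : μ * N ≤ photonEnergy ωP p := mul_photonNumber_le_photonEnergy hμ p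
  have hamgm : N ≤ (a * μ * N) ^ 2 + d ^ 2 := by
    have h := two_mul_le_add_sq (a * μ * N) d
    have h2 : 2 * (a * μ * N) * d = N := by simp only [d]; field_simp
    linarith
  have hsq : (a * μ * N) ^ 2 ≤ a ^ 2 * photonEnergy ωP p ^ 2 := by
    rw [mul_assoc, mul_pow]
    gcongr
  nlinarith

lemma weightedShift_mem_infinitesimallyBounded_HP {ωP : Fin M → ℝ} (hωP : ∀ i, 0 < ωP i)
    {w : CavIdx M → ℝ} {σ : CavIdx M → CavIdx M} (hσ : Set.InjOn σ {p | w p ≠ 0})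
    (hw : ∀ p, w p ^ 2 ≤ photonNumber p + 1) :
    weightedShift w σ ∈ infinitesimallyBounded (HP M ωP) := by
  obtain ⟨μ, hμ₀, hμ⟩ := exists_pos_forall_le hωP
  rw [HP_eq_weightedShift]
  refine weightedShift_mem_infinitesimallyBounded hσ (Set.injOn_id _) fun a ha => ?_
  obtain ⟨c, hc⟩ := exists_photonNumber_add_one_le hμ₀ hμ ha
  exact ⟨c, fun p => (hw p).trans (hc p)⟩

lemma HI_mem_infinitesimallyBounded_HP (ωI : Fin M → ℝ) {ωP : Fin M → ℝ}
    (hωP : ∀ i, 0 < ωP i) : HI M ωI ∈ infinitesimallyBounded (HP M ωP) := by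
  refine Submodule.sum_mem _ fun i _ => Submodule.smul_mem _ _ (Submodule.add_mem _ ?_ ?_)
  · rw [cre_mul_sigmaMinus]
    exact weightedShift_mem_infinitesimallyBounded_HP hωP (injOn_emit i) (emitWeight_sq_le i)
  · rw [ann_mul_sigmaPlus]
    exact weightedShift_mem_infinitesimallyBounded_HP hωP (injOn_absorb i) (absorbWeight_sq_le i)

end JaynesCummings

open JaynesCummings

theorem stmt13_general (M : ℕ) (ωP ωI : Fin M → ℝ)
    (hωP : ∀ i, 0 < ωP i)
    (b : ℝ) (hb0 : 0 < b) :
    ∃ c > 0, ∀ ψ : CavSpan M,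
      nrm (HI M ωI ψ) ≤ b * nrm (HP M ωP ψ) + c * nrm ψ := by
  obtain ⟨c, hc⟩ := HI_mem_infinitesimallyBounded_HP ωI hωP b hb0
  refine ⟨max c 1, by positivity, fun ψ => (hc ψ).trans ?_⟩
  gcongr
  · exact nrm_nonneg ψ
  · exact le_max_left c 1

/-- Relative bound of the Jaynes-Cummings interaction by the photon number operator:
for every `0 < b < 1` there exists `c > 0` such that for all `ψ` in the
finite-excitation span, `‖H_I ψ‖ ≤ b ‖H_P ψ‖ + c ‖ψ‖`. -/
theorem stmt13 (M : ℕ) (hM : 1 ≤ M) (ωP ωI : Fin M → ℝ)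
    (hωP : ∀ i, 0 < ωP i) (hωI : ∀ i, 0 < ωI i)
    (b : ℝ) (hb0 : 0 < b) (hb1 : b < 1) :
    ∃ c > 0, ∀ ψ : CavSpan M,
      nrm (HI M ωI ψ) ≤ b * nrm (HP M ωP ψ) + c * nrm ψ :=
  stmt13_general M ωP ωI hωP b hb0

end
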